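/- In any product space X = ∏_{i∈I} X_i, the Noetherian type of X is at most the least infinite κ such that X has a κ^op-like base of open boxes, which in turn is at most the supremum over i ∈ I of the Noetherian types of the factors X_i. -/

import Mathlib

open Cardinal Set

universe u

variable {X : Type u}

/-- `B` is a base for the topology of `X`. -/
def IsBase [TopologicalSpace X] (B : Set (Set X)) : Prop :=
  (∀ U ∈ B, IsOpen U) ∧ ∀ W : Set X, IsOpen W → ∀ p ∈ W, ∃ U ∈ B, p ∈ U ∧ U ⊆ W

/-- `B` is a local base at `p`. -/
def IsLocalBase [TopologicalSpace X] (p : X) (B : Set (Set X)) : Prop :=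
  (∀ U ∈ B, IsOpen U ∧ p ∈ U) ∧ ∀ W : Set X, IsOpen W → p ∈ W → ∃ U ∈ B, U ⊆ W

/-- `B` is a local π-base at `p`. -/
def IsLocalPiBase [TopologicalSpace X] (p : X) (B : Set (Set X)) : Prop :=
  (∀ U ∈ B, IsOpen U ∧ U.Nonempty) ∧ ∀ W : Set X, IsOpen W → p ∈ W → ∃ U ∈ B, U ⊆ W

/-- The weight of `X`: the least infinite cardinal `κ` such that `X` has a base of
cardinality at most `κ`. -/
noncomputable def weight (X : Type u) [TopologicalSpace X] : Cardinal.{u} :=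
  sInf {κ | ℵ₀ ≤ κ ∧ ∃ B : Set (Set X), IsBase B ∧ #B ≤ κ}

/-- The character of `p` in `X`. -/
noncomputable def character [TopologicalSpace X] (p : X) : Cardinal.{u} :=
  sInf {κ | ℵ₀ ≤ κ ∧ ∃ B : Set (Set X), IsLocalBase p B ∧ #B ≤ κ}

/-- The π-character of `p` in `X`. -/
noncomputable def piCharacter [TopologicalSpace X] (p : X) : Cardinal.{u} :=
  sInf {κ | ℵ₀ ≤ κ ∧ ∃ B : Set (Set X), IsLocalPiBase p B ∧ #B ≤ κ}

/-- A family of sets (ordered by `⊆`) is `κ^op`-like if no member is contained in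
`κ`-many members. -/
def IsOpLike {Y : Type u} (B : Set (Set Y)) (κ : Cardinal.{u}) : Prop :=
  ∀ U ∈ B, #{V : Set Y // V ∈ B ∧ U ⊆ V} < κ

/-- The Noetherian type of `X`: the least infinite `κ` such that `X` has a
`κ^op`-like base. -/
noncomputable def Nt (X : Type u) [TopologicalSpace X] : Cardinal.{u} :=
  sInf {κ | ℵ₀ ≤ κ ∧ ∃ B : Set (Set X), IsBase B ∧ IsOpLike B κ}

/-- `⟨F i⟩` is a `⟨#ι, κ⟩`-splitter of `X`: a sequence of finite open covers such
that for every index set `I` of cardinality `κ` and every choice `U i ∈ F i`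
(`i ∈ I`), the interior of `⋂_{i ∈ I} U i` is empty. -/
def IsSplitter [TopologicalSpace X] {ι : Type u} (F : ι → Set (Set X))
    (κ : Cardinal.{u}) : Prop :=
  (∀ i, (F i).Finite ∧ (∀ U ∈ F i, IsOpen U) ∧ ⋃₀ F i = Set.univ) ∧
  ∀ (I : Set ι) (U : ι → Set X), #I = κ → (∀ i ∈ I, U i ∈ F i) →
    interior (⋂ i ∈ I, U i) = ∅

/-- `W` is an open box in the product `∀ i, Y i`: a finite intersection of preimages
of open sets under projections. -/
def IsBoxP {ι : Type u} (Y : ι → Type u) [∀ i, TopologicalSpace (Y i)]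
    (W : Set (∀ i, Y i)) : Prop :=
  ∃ (s : Finset ι) (E : ∀ i, Set (Y i)), (∀ i ∈ s, IsOpen (E i)) ∧
    W = ⋂ i ∈ s, (fun f => f i) ⁻¹' (E i)

/-- The least infinite `κ` such that the product has a `κ^op`-like base of boxes. -/
noncomputable def NtBoxP {ι : Type u} (Y : ι → Type u) [∀ i, TopologicalSpace (Y i)] :
    Cardinal.{u} :=
  sInf {κ | ℵ₀ ≤ κ ∧ ∃ B : Set (Set (∀ i, Y i)),
    IsBase B ∧ (∀ W ∈ B, IsBoxP Y W) ∧ IsOpLike B κ}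

/-! Given `κᵢ^op`-like bases `Bᵢ` of the factors, the nonempty boxes with sides in the `Bᵢ`
form a base of the product. A box `W` containing a nonempty box `b` with support `s` is
determined by its projections onto the coordinates in `s`, since every other projection of `W`
contains that of `b`, which is the whole factor. Each of these finitely many projections is the
whole factor or a member of `Bᵢ` containing the corresponding side of `b`, so there are fewer
than `sup κᵢ` choices for `W`. -/

open Function

theorem Cardinal.mk_pi_lt_of_lt {α : Type u} [Finite α] {H : α → Type u} {κ : Cardinal.{u}}
    (hκ : ℵ₀ ≤ κ) (h : ∀ a, #(H a) < κ) : #(∀ a, H a) < κ := by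
  cases nonempty_fintype α
  rw [mk_pi, prod_eq_of_fintype, lift_id]
  exact Finset.prod_induction _ (· < κ) (fun _ _ => mul_lt_of_lt hκ)
    (one_lt_aleph0.trans_le hκ) fun a _ => h a

theorem Set.univ_pi_eval_image_pi {ι : Type*} {α : ι → Type*} (s : Set ι)
    (t : ∀ i, Set (α i)) : pi Set.univ (fun i => eval i '' s.pi t) = s.pi t :=
  (subset_pi_eval_image Set.univ _).antisymm' fun _ hf i hi =>
    eval_image_pi_subset hi (hf i (mem_univ i))

theorem Set.pi_eq_pi_of_eval_image_eq {ι : Type*} {α : ι → Type*} {s s₁ s₂ : Set ι}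
    {t t₁ t₂ : ∀ i, Set (α i)} (ht : (s.pi t).Nonempty) (h₁ : s.pi t ⊆ s₁.pi t₁)
    (h₂ : s.pi t ⊆ s₂.pi t₂)
    (h : ∀ i ∈ s, eval i '' s₁.pi t₁ = eval i '' s₂.pi t₂) :
    s₁.pi t₁ = s₂.pi t₂ := by
  classical
  have eval_image_eq_univ : ∀ i ∉ s, ∀ {s' : Set ι} {t' : ∀ i, Set (α i)},
      s.pi t ⊆ s'.pi t' → eval i '' s'.pi t' = Set.univ := fun i hi _ _ hsub =>
    eq_univ_of_univ_subset <| by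
      simpa [eval_image_pi_of_notMem hi, ht] using image_mono (f := eval i) hsub
  rw [← univ_pi_eval_image_pi s₁, ← univ_pi_eval_image_pi s₂]
  congr 1
  funext i
  by_cases hi : i ∈ s
  · exact h i hi
  · rw [eval_image_eq_univ i hi h₁, eval_image_eq_univ i hi h₂]

section OpLike

variable {Y : Type u} {B : Set (Set Y)} {κ κ' : Cardinal.{u}}

theorem IsOpLike.mono (h : IsOpLike B κ) (hle : κ ≤ κ') : IsOpLike B κ' :=
  fun U hU => (h U hU).trans_le hle

theorem IsOpLike.mk_supersets_insert_univ_lt (h : IsOpLike B κ) (hκ : ℵ₀ ≤ κ) {U : Set Y}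
    (hU : U ∈ B) : #{V : Set Y // V ∈ insert Set.univ B ∧ U ⊆ V} < κ := by
  have hsub : {V : Set Y | V ∈ insert Set.univ B ∧ U ⊆ V} ⊆
      insert Set.univ {V | V ∈ B ∧ U ⊆ V} := by
    rintro V ⟨rfl | hV, hUV⟩
    exacts [mem_insert _ _, mem_insert_of_mem _ ⟨hV, hUV⟩]
  calc #{V : Set Y // V ∈ insert Set.univ B ∧ U ⊆ V}
      ≤ #(insert Set.univ {V | V ∈ B ∧ U ⊆ V} : Set (Set Y)) := mk_le_mk_of_subset hsub
    _ ≤ #{V : Set Y // V ∈ B ∧ U ⊆ V} + 1 := mk_insert_le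
    _ < κ := add_lt_of_lt hκ (h U hU) (one_lt_aleph0.trans_le hκ)

end OpLike

section Nt

variable (X : Type u) [TopologicalSpace X]

theorem nonempty_nt_set :
    {κ : Cardinal.{u} | ℵ₀ ≤ κ ∧ ∃ B : Set (Set X), IsBase B ∧ IsOpLike B κ}.Nonempty :=
  ⟨max ℵ₀ (Order.succ #(Set X)), le_max_left _ _, {U | IsOpen U},
    ⟨fun _ hU => hU, fun W hW _ hp => ⟨W, hW, hp, subset_rfl⟩⟩,
    fun _ _ => (mk_subtype_le _).trans_lt <|
      (Order.lt_succ _).trans_le (le_max_right _ _)⟩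

theorem aleph0_le_nt : ℵ₀ ≤ Nt X :=
  (csInf_mem (nonempty_nt_set X)).1

theorem exists_isBase_isOpLike_nt : ∃ B : Set (Set X), IsBase B ∧ IsOpLike B (Nt X) :=
  (csInf_mem (nonempty_nt_set X)).2

variable {X}

theorem nt_le {κ : Cardinal.{u}} (hκ : ℵ₀ ≤ κ) {B : Set (Set X)} (hB : IsBase B)
    (hBκ : IsOpLike B κ) : Nt X ≤ κ :=
  csInf_le' ⟨hκ, B, hB, hBκ⟩

end Nt

theorem nt_le_ntBoxP {ι : Type u} {Y : ι → Type u} [∀ i, TopologicalSpace (Y i)]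
    (h : {κ | ℵ₀ ≤ κ ∧ ∃ B : Set (Set (∀ i, Y i)),
      IsBase B ∧ (∀ W ∈ B, IsBoxP Y W) ∧ IsOpLike B κ}.Nonempty) :
    Nt (∀ i, Y i) ≤ NtBoxP Y := by
  obtain ⟨hκ, B, hB, -, hBκ⟩ := csInf_mem h
  exact nt_le hκ hB hBκ

section BoxBase

variable {ι : Type u} {Y : ι → Type u}

def boxBase (B : ∀ i, Set (Set (Y i))) : Set (Set (∀ i, Y i)) :=
  {W | W.Nonempty ∧ ∃ (s : Finset ι) (U : ∀ i, Set (Y i)),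
    (∀ i ∈ s, U i ∈ B i) ∧ W = (s : Set ι).pi U}

variable {B : ∀ i, Set (Set (Y i))}

theorem eval_image_mem_insert_univ {W : Set (∀ i, Y i)} (hW : W ∈ boxBase B) (i : ι) :
    eval i '' W ∈ insert Set.univ (B i) := by
  classical
  obtain ⟨hne, s, U, hU, rfl⟩ := hW
  by_cases hi : i ∈ s
  · exact mem_insert_of_mem _ (eval_image_pi hi hne ▸ hU i hi)
  · simp [eval_image_pi_of_notMem (Finset.mem_coe.not.2 hi), hne]

theorem isOpLike_boxBase {κ : Cardinal.{u}} (hκ : ℵ₀ ≤ κ) (hB : ∀ i, IsOpLike (B i) κ) :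
    IsOpLike (boxBase B) κ := by
  rintro _ ⟨hne, s, U, hU, rfl⟩
  let sides : {W // W ∈ boxBase B ∧ (s : Set ι).pi U ⊆ W} →
      ∀ i : s, {V : Set (Y i) // V ∈ insert Set.univ (B i) ∧ U i ⊆ V} := fun W i =>
    ⟨eval (i : ι) '' W.1, eval_image_mem_insert_univ W.2.1 i,
      (eval_image_pi (Finset.mem_coe.2 i.2) hne).symm.subset.trans
        (image_mono (f := eval (i : ι)) W.2.2)⟩
  have sides_injective : Injective sides := by
    intro W₁ W₂ h
    obtain ⟨⟨-, s₁, U₁, -, hW₁⟩, h₁⟩ := W₁.2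
    obtain ⟨⟨-, s₂, U₂, -, hW₂⟩, h₂⟩ := W₂.2
    refine Subtype.ext <| hW₁.trans <| .trans ?_ hW₂.symm
    refine pi_eq_pi_of_eval_image_eq hne (hW₁ ▸ h₁) (hW₂ ▸ h₂) fun i hi => ?_
    rw [← hW₁, ← hW₂]
    exact congrArg Subtype.val (congrFun h ⟨i, hi⟩)
  exact (mk_le_of_injective sides_injective).trans_lt <|
    mk_pi_lt_of_lt hκ fun i => (hB i).mk_supersets_insert_univ_lt hκ (hU i i.2)

variable [∀ i, TopologicalSpace (Y i)]

theorem isBoxP_of_mem_boxBase (hB : ∀ i, IsBase (B i)) {W : Set (∀ i, Y i)}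
    (hW : W ∈ boxBase B) : IsBoxP Y W := by
  obtain ⟨-, s, U, hU, rfl⟩ := hW
  exact ⟨s, U, fun i hi => (hB i).1 _ (hU i hi), pi_def _ _⟩

theorem isBase_boxBase (hB : ∀ i, IsBase (B i)) : IsBase (boxBase B) := by
  refine ⟨fun W hW => ?_, fun W hW p hp => ?_⟩
  · obtain ⟨-, s, U, hU, rfl⟩ := hW
    exact isOpen_set_pi s.finite_toSet fun i hi => (hB i).1 _ (hU i hi)
  · obtain ⟨s, u, hu, hsub⟩ := isOpen_pi_iff.1 hW p hp
    have hV : ∀ i, ∃ V, i ∈ s → V ∈ B i ∧ p i ∈ V ∧ V ⊆ u i := fun i => by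
      by_cases hi : i ∈ s
      · obtain ⟨V, hV⟩ := (hB i).2 (u i) (hu i hi).1 (p i) (hu i hi).2
        exact ⟨V, fun _ => hV⟩
      · exact ⟨∅, fun h => absurd h hi⟩
    choose V hV using hV
    have hpV : p ∈ (s : Set ι).pi V := fun i hi => (hV i hi).2.1
    exact ⟨_, ⟨⟨p, hpV⟩, s, V, fun i hi => (hV i hi).1, rfl⟩, hpV,
      fun q hq => hsub fun i hi => (hV i hi).2.2 (hq i hi)⟩

end BoxBase

/-- Peregudov: `Nt(∏ Y i) ≤ Nt_box(∏ Y i) ≤ sup_i Nt(Y i)`. -/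
theorem nt_le_ntBox_le_sup {ι : Type u} [Nonempty ι] (Y : ι → Type u)
    [∀ i, TopologicalSpace (Y i)] :
    Nt (∀ i, Y i) ≤ NtBoxP Y ∧ NtBoxP Y ≤ ⨆ i, Nt (Y i) := by
  set κ := ⨆ i, Nt (Y i)
  have nt_le_κ : ∀ i, Nt (Y i) ≤ κ := le_ciSup bddAbove_of_small
  have hκ : ℵ₀ ≤ κ := (aleph0_le_nt _).trans (nt_le_κ (Classical.arbitrary ι))
  choose B hB hBop using fun i => exists_isBase_isOpLike_nt (Y i)
  have hbox : κ ∈ {κ | ℵ₀ ≤ κ ∧ ∃ B : Set (Set (∀ i, Y i)),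
      IsBase B ∧ (∀ W ∈ B, IsBoxP Y W) ∧ IsOpLike B κ} :=
    ⟨hκ, boxBase B, isBase_boxBase hB, fun _ => isBoxP_of_mem_boxBase hB,
      isOpLike_boxBase hκ fun i => (hBop i).mono (nt_le_κ i)⟩
  exact ⟨nt_le_ntBoxP ⟨κ, hbox⟩, csInf_le' hbox⟩
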